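/- For coprime nonnegative integers a_0, ..., a_r with a_0 + ... + a_r = m (m ≥ 1), the multinomial coefficient m!/(a_0!···a_r!) is divisible by m. -/

import Mathlib

/-!
Peeling one part off, `a_i * multinomial a = (a_i * C(m, a_i)) * multinomial (a without a_i)`,
and `a_i * C(m, a_i) = m * C(m - 1, a_i - 1)`. So `m` divides every `a_i * multinomial a`,
hence also their gcd, which is `gcd(a_0, …, a_r) * multinomial a = multinomial a`.
-/

open Finset

namespace Nat

theorem dvd_mul_choose (n k : ℕ) : n ∣ k * n.choose k := by
  rcases n with _ | n
  · rcases k with _ | k <;> simp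
  rcases k with _ | k
  · simp
  · exact ⟨n.choose k, by rw [mul_comm, ← add_one_mul_choose_eq]⟩

theorem sum_dvd_mul_multinomial {α : Type*} [DecidableEq α] {s : Finset α} (f : α → ℕ)
    {a : α} (ha : a ∈ s) : (∑ i ∈ s, f i) ∣ f a * multinomial s f := by
  rw [← insert_erase ha, multinomial_insert (notMem_erase a s), sum_insert (notMem_erase a s),
    ← mul_assoc]
  exact Dvd.dvd.mul_right (dvd_mul_choose _ _) _

theorem sum_dvd_gcd_mul_multinomial {α : Type*} (s : Finset α) (f : α → ℕ) :
    (∑ i ∈ s, f i) ∣ s.gcd f * multinomial s f := by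
  classical
  rw [← normalize_eq (multinomial s f), ← Finset.gcd_mul_right]
  exact Finset.dvd_gcd fun _ ha ↦ sum_dvd_mul_multinomial f ha

end Nat

theorem stmt7_general (m r : ℕ) (a : Fin (r + 1) → ℕ)
    (hgcd : Finset.univ.gcd a = 1) (hsum : ∑ i, a i = m) :
    m ∣ Nat.multinomial Finset.univ a := by
  simpa [hsum, hgcd] using Nat.sum_dvd_gcd_mul_multinomial Finset.univ a

/-- for coprime nonnegative integers `a_0,…,a_r` with sum `m ≥ 1`,
the multinomial coefficient `m!/(a_0!⋯a_r!)` is divisible by `m`. -/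
theorem stmt7 (m r : ℕ) (hm : 1 ≤ m) (a : Fin (r + 1) → ℕ)
    (hgcd : Finset.univ.gcd a = 1) (hsum : ∑ i, a i = m) :
    m ∣ Nat.multinomial Finset.univ a :=
  stmt7_general m r a hgcd hsum
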